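/- Let G be a finite bipartite graph with bipartition V = A ∪ B. For each k, the number of functions c : V → {Empty, Blue, Red} with exactly k non-Empty vertices such that no edge joins two vertices of the same non-Empty color equals the number of such functions with exactly k non-Empty vertices such that no edge joins two vertices of different non-Empty colors. -/

import Mathlib

inductive Color : Type
  | Empty | Blue | Red
  deriving DecidableEq

instance : Fintype Color where
  elems := {Color.Empty, Color.Blue, Color.Red}
  complete := by intro x; cases x <;> simp

/-!
Swapping Blue and Red on one side of the bipartition preserves the set of non-Empty vertices,
and across an edge (whose ends lie on opposite sides, so exactly one end is swapped) it turns
"both ends carry the same colour" into "both ends carry different colours".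
-/

namespace Color

def swap : Color → Color
  | Empty => Empty
  | Blue => Red
  | Red => Blue

theorem swap_involutive : Function.Involutive swap := by
  intro x; cases x <;> rfl

@[simp]
theorem swap_eq_empty_iff {x : Color} : x.swap = Empty ↔ x = Empty := by
  cases x <;> simp [swap]

def swapIf (b : Bool) (x : Color) : Color := if b then x.swap else x

theorem swapIf_involutive (b : Bool) : Function.Involutive (swapIf b) := by
  intro x; cases b <;> simp [swapIf, swap_involutive x]

@[simp]
theorem swapIf_eq_empty_iff {b : Bool} {x : Color} : x.swapIf b = Empty ↔ x = Empty := by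
  cases b <;> simp [swapIf]

theorem same_iff_swapIf_differ {b b' : Bool} (h : b ≠ b') (x y : Color) :
    (x ≠ Empty ∧ x = y) ↔
      (x.swapIf b ≠ Empty ∧ y.swapIf b' ≠ Empty ∧ x.swapIf b ≠ y.swapIf b') := by
  revert b b' x y; decide

end Color

section FlipSide

variable {V : Type*}

def flipSide (side : V → Bool) (c : V → Color) : V → Color := fun v => (c v).swapIf (side v)

theorem flipSide_involutive (side : V → Bool) : Function.Involutive (flipSide side) :=
  fun c => funext fun v => Color.swapIf_involutive (side v) (c v)

theorem flipSide_ne_empty_iff (side : V → Bool) (c : V → Color) (v : V) :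
    flipSide side c v ≠ Color.Empty ↔ c v ≠ Color.Empty :=
  Color.swapIf_eq_empty_iff.not

end FlipSide

theorem col_eq_snort_on_bipartite (V : Type*) [Fintype V] [DecidableEq V]
    (G : SimpleGraph V) [DecidableRel G.Adj]
    (side : V → Bool) (hbip : ∀ u v : V, G.Adj u v → side u ≠ side v)
    (k : ℕ) :
    Fintype.card {c : V → Color //
        (Finset.univ.filter fun v => c v ≠ Color.Empty).card = k ∧
        ∀ u v : V, G.Adj u v → ¬(c u ≠ Color.Empty ∧ c u = c v)} =
      Fintype.card {c : V → Color //
        (Finset.univ.filter fun v => c v ≠ Color.Empty).card = k ∧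
        ∀ u v : V, G.Adj u v → ¬(c u ≠ Color.Empty ∧ c v ≠ Color.Empty ∧ c u ≠ c v)} := by
  refine Fintype.card_congr <| (flipSide_involutive side).toPerm.subtypeEquiv fun c => ?_
  refine and_congr ?_ <| forall₂_congr fun u v => imp_congr_right fun huv => not_congr ?_
  · simp only [Function.Involutive.coe_toPerm, flipSide_ne_empty_iff]
  · exact Color.same_iff_swapIf_differ (hbip u v huv) (c u) (c v)
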